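/- Let x be a solution of the EigenAnt dynamics with positive initial conditions, and assume at least one index j has d_j < d_1. Define σ_1 := (1/(β d_1)) Σ_{j : d_j = d_1} x_j(0), d′_2 := max{ d_j : d_j < d_1 }, and σ_2 := (1/(β d′_2)) Σ_{j : d_j = d′_2} x_j(0). Then the total S(t) := Σ_{j=1}^n x_j(t) converges to β d_1/α with speed proportional to the gap between d_1 and d′_2: ( S(t) − β d_1/α ) · e^{α(1 − d′_2/d_1) t} → − β σ_2 (d_1 − d′_2) (α σ_1)^{−d′_2/d_1} as t → +∞. -/

import Mathlib

/-!
The time change `w' = β / S`, `w 0 = 0` linearises the system: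
`x i t = x i 0 * exp (d i * w t - α t)`, so `S t * exp (α t) = P (w t)` with
`P y = ∑ x j 0 * exp (d j * y)`, and differentiating shows `exp (α t) = E (w t)` for another
exponential sum `E` (`eigenAntClock`). Hence `(S t - β d₁ / α) * exp (α (1 - d₂' / d₁) t)` equals
`N (w t) * E (w t) ^ (-d₂' / d₁)` with `N = P - (β d₁ / α) E`. As `w → ∞`, the limit is read off
from the leading exponentials: `E y ~ α σ₁ e^{d₁ y}`, while in `N` the `e^{d₁ y}` terms cancel,
leaving `N y ~ β σ₂ (d₂' - d₁) e^{d₂' y}`.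
-/

open Filter MeasureTheory Set Real

open Finset Topology

theorem eq_of_hasDerivAt_of_nonneg {f g f' : ℝ → ℝ} (hf : ∀ t, 0 ≤ t → HasDerivAt f (f' t) t)
    (hg : ∀ t, 0 ≤ t → HasDerivAt g (f' t) t) (h0 : f 0 = g 0) {t : ℝ} (ht : 0 ≤ t) :
    f t = g t :=
  eq_of_has_deriv_right_eq (fun s hs => (hf s hs.1).hasDerivWithinAt)
    (fun s hs => (hg s hs.1).hasDerivWithinAt)
    (fun s hs => (hf s hs.1).continuousAt.continuousWithinAt)
    (fun s hs => (hg s hs.1).continuousAt.continuousWithinAt) h0 t ⟨ht, le_rfl⟩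

theorem eq_mul_exp_of_hasDerivAt_mul {y A a : ℝ → ℝ} (hy : ∀ t, 0 ≤ t → HasDerivAt y (a t * y t) t)
    (hA : ∀ t, 0 ≤ t → HasDerivAt A (a t) t) {t : ℝ} (ht : 0 ≤ t) :
    y t = y 0 * exp (A t - A 0) := by
  have hconst : y t * exp (-A t) = y 0 * exp (-A 0) := by
    refine eq_of_hasDerivAt_of_nonneg (f := fun s => y s * exp (-A s)) (f' := 0)
      (fun s hs => ?_) (fun s _ => hasDerivAt_const s _) rfl ht
    exact ((hy s hs).mul (hA s hs).neg.exp).congr_deriv (by simp only [Pi.zero_apply]; ring)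
  rw [sub_eq_add_neg, exp_add, mul_left_comm, ← hconst, mul_left_comm, ← exp_add]
  simp

theorem exists_hasDerivAt_of_continuousOn_Ici {f : ℝ → ℝ} (hf : ContinuousOn f (Ici 0)) :
    ∃ F : ℝ → ℝ, F 0 = 0 ∧ ∀ t, 0 ≤ t → HasDerivAt F (f t) t := by
  have hc : Continuous fun s => f (max s 0) :=
    hf.comp_continuous (continuous_id.max continuous_const) fun s => le_max_right s 0
  refine ⟨fun t => ∫ s in (0 : ℝ)..t, f (max s 0), intervalIntegral.integral_same, fun t ht => ?_⟩
  simpa [max_eq_left ht] using (hc.integral_hasStrictDerivAt 0 t).hasDerivAt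

theorem tendsto_exp_mul_atTop_nhds_zero {c : ℝ} (hc : c < 0) :
    Tendsto (fun y => exp (c * y)) atTop (𝓝 0) :=
  tendsto_exp_atBot.comp (tendsto_id.const_mul_atTop_of_neg hc)

variable {ι : Type*} [Fintype ι]

theorem tendsto_add_sum_mul_exp_mul_exp_neg {c r : ι → ℝ} {μ : ℝ}
    (a : ℝ) (hμ : 0 < μ) (hr : ∀ j, c j ≠ 0 → r j ≤ μ) :
    Tendsto (fun y => (a + ∑ j, c j * exp (r j * y)) * exp (-(μ * y))) atTop
      (𝓝 (∑ j with r j = μ, c j)) := by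
  have hterm : ∀ j, Tendsto (fun y => c j * exp ((r j - μ) * y)) atTop
      (𝓝 (if r j = μ then c j else 0)) := by
    intro j
    split_ifs with hj
    · simp [hj]
    · by_cases hcj : c j = 0
      · simp [hcj]
      · simpa using (tendsto_exp_mul_atTop_nhds_zero
          (sub_neg.2 (lt_of_le_of_ne (hr j hcj) hj))).const_mul (c j)
  have hlim := ((tendsto_exp_mul_atTop_nhds_zero (neg_lt_zero.2 hμ)).const_mul a).add
    (tendsto_finsetSum univ fun j _ => hterm j)
  rw [mul_zero, zero_add, ← sum_filter] at hlim
  refine hlim.congr fun y => ?_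
  simp only [add_mul, sum_mul, mul_assoc, ← exp_add]
  congr 1
  · ring_nf
  · exact sum_congr rfl fun j _ => by ring_nf

theorem tendsto_mul_rpow_of_tendsto_mul_exp_neg {f g : ℝ → ℝ} {a b L M : ℝ} (hb : b ≠ 0)
    (hM : 0 < M) (hf : Tendsto (fun y => f y * exp (-(a * y))) atTop (𝓝 L))
    (hg : Tendsto (fun y => g y * exp (-(b * y))) atTop (𝓝 M)) :
    Tendsto (fun y => f y * g y ^ (-(a / b))) atTop (𝓝 (L * M ^ (-(a / b)))) := by
  refine (hf.mul (hg.rpow_const (Or.inl hM.ne'))).congr' ?_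
  filter_upwards [hg.eventually (eventually_gt_nhds hM)] with y hy
  have hgy : 0 < g y := pos_of_mul_pos_left hy (exp_pos _).le
  rw [mul_rpow hgy.le (exp_pos _).le, ← exp_mul, mul_mul_mul_comm, ← exp_add]
  field_simp
  simp

structure IsEigenAntSolution (α β : ℝ) (d : ι → ℝ) (x : ℝ → ι → ℝ) : Prop where
  total_ne_zero : ∀ t, 0 ≤ t → ∑ j, x t j ≠ 0
  hasDerivAt : ∀ i t, 0 ≤ t →
    HasDerivAt (fun s => x s i) ((-α + β * d i / ∑ j, x t j) * x t i) t

/-- Along a solution, `exp (α t) = eigenAntClock α β d (x 0) (w t)` for the time change `w`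
(see `IsEigenAntSolution.exp_eq_eigenAntClock`). -/
noncomputable def eigenAntClock (α β : ℝ) (d x₀ : ι → ℝ) (y : ℝ) : ℝ :=
  (1 - ∑ j, α * x₀ j / (β * d j)) + ∑ j, α * x₀ j / (β * d j) * exp (d j * y)

theorem monotone_eigenAntClock {α β : ℝ} {d x₀ : ι → ℝ} (hα : 0 ≤ α) (hβ : 0 ≤ β)
    (hd : ∀ j, 0 ≤ d j) (hx₀ : ∀ j, 0 ≤ x₀ j) : Monotone (eigenAntClock α β d x₀) := by
  intro y z hyz
  unfold eigenAntClock
  gcongr with j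
  · have := hd j; have := hx₀ j; positivity
  · exact hd j

theorem tendsto_eigenAntClock_mul_exp_neg {α β d₁ : ℝ} {d x₀ : ι → ℝ}
    (hd : ∀ j, d j ≤ d₁) (hd₁ : 0 < d₁) :
    Tendsto (fun y => eigenAntClock α β d x₀ y * exp (-(d₁ * y))) atTop
      (𝓝 (α / (β * d₁) * ∑ j with d j = d₁, x₀ j)) := by
  have hlim := tendsto_add_sum_mul_exp_mul_exp_neg (c := fun j => α * x₀ j / (β * d j))
    (1 - ∑ j, α * x₀ j / (β * d j)) hd₁ fun j _ => hd j
  have hval : ∑ j with d j = d₁, α * x₀ j / (β * d j) =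
      α / (β * d₁) * ∑ j with d j = d₁, x₀ j := by
    rw [mul_sum]
    exact sum_congr rfl fun j hj => by rw [(mem_filter.1 hj).2]; ring
  rwa [hval] at hlim

theorem tendsto_sub_eigenAntClock_mul_exp_neg {α β d₁ d₂ : ℝ} {d x₀ : ι → ℝ}
    (hα : α ≠ 0) (hβ : β ≠ 0) (hd : ∀ j, d j ≠ 0) (hd₂ : 0 < d₂)
    (hd₂max : ∀ j, d j ≠ d₁ → d j ≤ d₂) :
    Tendsto (fun y => ((∑ j, x₀ j * exp (d j * y)) - β * d₁ / α * eigenAntClock α β d x₀ y) *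
      exp (-(d₂ * y))) atTop (𝓝 ((1 - d₁ / d₂) * ∑ j with d j = d₂, x₀ j)) := by
  have hc : ∀ j, x₀ j * (1 - d₁ / d j) ≠ 0 → d j ≤ d₂ := fun j hj =>
    hd₂max j fun h => hj (by rw [h, div_self (h ▸ hd j), sub_self, mul_zero])
  convert tendsto_add_sum_mul_exp_mul_exp_neg (-(β * d₁ / α) * (1 - ∑ j, α * x₀ j / (β * d j)))
    hd₂ hc using 2 with y
  · have hterm : ∀ j, x₀ j * (1 - d₁ / d j) * exp (d j * y) = x₀ j * exp (d j * y) -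
        β * d₁ / α * (α * x₀ j / (β * d j) * exp (d j * y)) := fun j => by
      field_simp [hd j]
    simp only [eigenAntClock, hterm, sum_sub_distrib, ← mul_sum]
    ring
  · rw [mul_sum]
    refine sum_congr rfl fun j hj => ?_
    rw [(mem_filter.1 hj).2]
    ring

namespace IsEigenAntSolution

variable {α β : ℝ} {d : ι → ℝ} {x : ℝ → ι → ℝ} {w : ℝ → ℝ}

theorem exists_timeChange (hx : IsEigenAntSolution α β d x) :
    ∃ w : ℝ → ℝ, w 0 = 0 ∧ ∀ t, 0 ≤ t → HasDerivAt w (β / ∑ j, x t j) t :=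
  exists_hasDerivAt_of_continuousOn_Ici fun t ht =>
    (continuousAt_const.div (HasDerivAt.fun_sum fun i _ => hx.hasDerivAt i t ht).continuousAt
      (hx.total_ne_zero t ht)).continuousWithinAt

theorem eq_mul_exp (hx : IsEigenAntSolution α β d x) (hw0 : w 0 = 0)
    (hw : ∀ t, 0 ≤ t → HasDerivAt w (β / ∑ j, x t j) t) (i : ι) {t : ℝ} (ht : 0 ≤ t) :
    x t i = x 0 i * exp (d i * w t - α * t) := by
  have hA : ∀ s, 0 ≤ s → HasDerivAt (fun s => d i * w s - α * s) (-α + β * d i / ∑ j, x s j) s :=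
    fun s hs => (((hw s hs).const_mul (d i)).sub ((hasDerivAt_id s).const_mul α)).congr_deriv
      (by ring)
  simpa [hw0] using eq_mul_exp_of_hasDerivAt_mul (y := fun s => x s i) (hx.hasDerivAt i) hA ht

theorem total_mul_exp (hx : IsEigenAntSolution α β d x) (hw0 : w 0 = 0)
    (hw : ∀ t, 0 ≤ t → HasDerivAt w (β / ∑ j, x t j) t) {t : ℝ} (ht : 0 ≤ t) :
    (∑ j, x t j) * exp (α * t) = ∑ j, x 0 j * exp (d j * w t) := by
  rw [sum_mul]
  refine sum_congr rfl fun j _ => ?_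
  rw [hx.eq_mul_exp hw0 hw j ht, mul_assoc, ← exp_add, sub_add_cancel]

theorem exp_eq_eigenAntClock (hx : IsEigenAntSolution α β d x) (hβ : β ≠ 0) (hd : ∀ j, d j ≠ 0)
    (hw0 : w 0 = 0) (hw : ∀ t, 0 ≤ t → HasDerivAt w (β / ∑ j, x t j) t) {t : ℝ} (ht : 0 ≤ t) :
    exp (α * t) = eigenAntClock α β d (x 0) (w t) := by
  refine eq_of_hasDerivAt_of_nonneg (f := fun s => exp (α * s))
    (g := fun s => eigenAntClock α β d (x 0) (w s)) (f' := fun s => α * exp (α * s))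
    (fun s _ => ?_) (fun s hs => ?_) (by simp [eigenAntClock, hw0]) ht
  · exact ((hasDerivAt_id s).const_mul α).exp.congr_deriv (by rw [id]; ring)
  · have hS := hx.total_ne_zero s hs
    have hderiv : α * exp (α * s) = ∑ j, α * x 0 j / (β * d j) *
        (exp (d j * w s) * (d j * (β / ∑ j, x s j))) := by
      calc α * exp (α * s) = α / (∑ j, x s j) * ((∑ j, x s j) * exp (α * s)) := by field_simp
        _ = _ := by
          rw [hx.total_mul_exp hw0 hw hs, mul_sum]
          exact sum_congr rfl fun j _ => by field_simp [hd j]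
    rw [hderiv]
    exact (HasDerivAt.fun_sum fun j _ => ((hw s hs).const_mul (d j)).exp.const_mul _).const_add _

theorem tendsto_timeChange_atTop (hx : IsEigenAntSolution α β d x) (hα : 0 < α) (hβ : 0 < β)
    (hd : ∀ j, 0 < d j) (hx₀ : ∀ j, 0 ≤ x 0 j) (hw0 : w 0 = 0)
    (hw : ∀ t, 0 ≤ t → HasDerivAt w (β / ∑ j, x t j) t) : Tendsto w atTop atTop := by
  have hclock : Tendsto (fun t => eigenAntClock α β d (x 0) (w t)) atTop atTop := by
    refine (tendsto_exp_atTop.comp (tendsto_id.const_mul_atTop hα)).congr' ?_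
    filter_upwards [eventually_ge_atTop 0] with t ht
    exact hx.exp_eq_eigenAntClock hβ.ne' (fun j => (hd j).ne') hw0 hw ht
  refine tendsto_atTop.2 fun M => ?_
  filter_upwards [hclock.eventually_gt_atTop (eigenAntClock α β d (x 0) M)] with t ht
  exact ((monotone_eigenAntClock hα.le hβ.le (fun j => (hd j).le) hx₀).reflect_lt ht).le

theorem sub_mul_exp_eq (hx : IsEigenAntSolution α β d x) (hβ : β ≠ 0) (hd : ∀ j, d j ≠ 0)
    (hw0 : w 0 = 0) (hw : ∀ t, 0 ≤ t → HasDerivAt w (β / ∑ j, x t j) t) (c κ : ℝ) {t : ℝ}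
    (ht : 0 ≤ t) :
    ((∑ j, x t j) - c) * exp (α * (1 - κ) * t) =
      ((∑ j, x 0 j * exp (d j * w t)) - c * eigenAntClock α β d (x 0) (w t)) *
        eigenAntClock α β d (x 0) (w t) ^ (-κ) := by
  rw [← hx.exp_eq_eigenAntClock hβ hd hw0 hw ht, ← hx.total_mul_exp hw0 hw ht, ← exp_mul,
    show α * (1 - κ) * t = α * t + α * t * -κ by ring, exp_add]
  ring

end IsEigenAntSolution

theorem stmt18_general
    (n : ℕ) (hn : 0 < n) (α β : ℝ) (hα : 0 < α) (hβ : 0 < β)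
    (d : Fin n → ℝ) (hd : ∀ i j : Fin n, i ≤ j → d j ≤ d i) (hdpos : ∀ i, 0 < d i)
    (x : ℝ → Fin n → ℝ)
    (hS : ∀ t : ℝ, 0 ≤ t → (∑ j, x t j) ≠ 0)
    (hode : ∀ (i : Fin n) (t : ℝ), 0 ≤ t →
      HasDerivAt (fun s => x s i) ((-α + β * d i / (∑ j, x t j)) * x t i) t)
    (hx0 : ∀ i, 0 < x 0 i)
    (σ1 σ2 d2 : ℝ)
    (hσ1 : σ1 = (1 / (β * d ⟨0, hn⟩)) * ∑ j ∈ Finset.univ.filter (fun j => d j = d ⟨0, hn⟩), x 0 j)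
    (hd2mem : ∃ j, d j = d2)
    (hd2max : ∀ j, d j < d ⟨0, hn⟩ → d j ≤ d2)
    (hσ2 : σ2 = (1 / (β * d2)) * ∑ j ∈ Finset.univ.filter (fun j => d j = d2), x 0 j) :
    Tendsto (fun t => ((∑ j, x t j) - β * d ⟨0, hn⟩ / α) * Real.exp (α * (1 - d2 / d ⟨0, hn⟩) * t))
      atTop (nhds (-(β * σ2 * (d ⟨0, hn⟩ - d2) * (α * σ1) ^ (-(d2 / d ⟨0, hn⟩))))) := by
  set i₀ : Fin n := ⟨0, hn⟩
  have hsol : IsEigenAntSolution α β d x := ⟨hS, hode⟩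
  have hd₀ : ∀ j, d j ≠ 0 := fun j => (hdpos j).ne'
  have hmax : ∀ j, d j ≤ d i₀ := fun j => hd i₀ j (Nat.zero_le _)
  have hd₂ : 0 < d2 := by
    obtain ⟨j, rfl⟩ := hd2mem
    exact hdpos j
  have hσ₁ : 0 < α * σ1 := by
    rw [hσ1]
    have := hdpos i₀
    have : 0 < ∑ j with d j = d i₀, x 0 j := sum_pos (fun j _ => hx0 j) ⟨i₀, by simp⟩
    positivity
  obtain ⟨w, hw0, hw⟩ := hsol.exists_timeChange
  have hN := tendsto_sub_eigenAntClock_mul_exp_neg (x₀ := x 0) hα.ne' hβ.ne' hd₀ hd₂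
    fun j hj => hd2max j ((hmax j).lt_of_ne hj)
  have hE := tendsto_eigenAntClock_mul_exp_neg (α := α) (β := β) (x₀ := x 0) hmax (hdpos i₀)
  rw [show α / (β * d i₀) * ∑ j with d j = d i₀, x 0 j = α * σ1 by rw [hσ1]; ring] at hE
  have hlim := (tendsto_mul_rpow_of_tendsto_mul_exp_neg (hdpos i₀).ne' hσ₁ hN hE).comp
    (hsol.tendsto_timeChange_atTop hα hβ hdpos (fun j => (hx0 j).le) hw0 hw)
  convert hlim.congr' ?_ using 2
  · rw [hσ2]
    field_simp
    ring
  · filter_upwards [eventually_ge_atTop 0] with t ht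
    exact (hsol.sub_mul_exp_eq hβ.ne' hd₀ hw0 hw _ _ ht).symm

theorem stmt18
    (n : ℕ) (hn : 0 < n) (α β : ℝ) (hα : 0 < α) (hβ : 0 < β)
    (d : Fin n → ℝ) (hd : ∀ i j : Fin n, i ≤ j → d j ≤ d i) (hdpos : ∀ i, 0 < d i)
    (x : ℝ → Fin n → ℝ)
    (hS : ∀ t : ℝ, 0 ≤ t → (∑ j, x t j) ≠ 0)
    (hode : ∀ (i : Fin n) (t : ℝ), 0 ≤ t →
      HasDerivAt (fun s => x s i) ((-α + β * d i / (∑ j, x t j)) * x t i) t)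
    (hx0 : ∀ i, 0 < x 0 i)
    (hsub : ∃ j, d j < d ⟨0, hn⟩)
    (σ1 σ2 d2 : ℝ)
    (hσ1 : σ1 = (1 / (β * d ⟨0, hn⟩)) * ∑ j ∈ Finset.univ.filter (fun j => d j = d ⟨0, hn⟩), x 0 j)
    (hd2mem : ∃ j, d j = d2) (hd2lt : d2 < d ⟨0, hn⟩)
    (hd2max : ∀ j, d j < d ⟨0, hn⟩ → d j ≤ d2)
    (hσ2 : σ2 = (1 / (β * d2)) * ∑ j ∈ Finset.univ.filter (fun j => d j = d2), x 0 j) :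
    Tendsto (fun t => ((∑ j, x t j) - β * d ⟨0, hn⟩ / α) * Real.exp (α * (1 - d2 / d ⟨0, hn⟩) * t))
      atTop (nhds (-(β * σ2 * (d ⟨0, hn⟩ - d2) * (α * σ1) ^ (-(d2 / d ⟨0, hn⟩))))) :=
  stmt18_general n hn α β hα hβ d hd hdpos x hS hode hx0 σ1 σ2 d2 hσ1 hd2mem hd2max hσ2
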